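/- arXiv:2410.01765 — 5 statements merged into one kernel-verified Lean document; each statement's English description precedes it below -/
import Mathlib

section
/- For both admissible bilinears B in signature (1,1), the associated Dirac current κ defined by η(κ(ε,ε'), e_μ) = B(ε, Γμε') is symmetric: κ(ε,ε') = κ(ε',ε) for all ε, ε' ∈ ℝ². -/
open Matrix

/-- Gamma matrices with raised index in signature (1,1): Γ⁰ = −Γ₀ = −Ω, Γ¹ = Γ₁ = σ₁. -/
def GammaLUp : Fin 2 → Matrix (Fin 2) (Fin 2) ℝ :=
  ![-(!![0, 1; -1, 0]), !![0, 1; 1, 0]]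

theorem dirac_current_symmetric_lorentzian :
    (∀ (μ : Fin 2) (ε ε' : Fin 2 → ℝ),
      ε ⬝ᵥ (!![0, 1; 1, 0] *ᵥ (GammaLUp μ *ᵥ ε')) =
        ε' ⬝ᵥ (!![0, 1; 1, 0] *ᵥ (GammaLUp μ *ᵥ ε))) ∧
    (∀ (μ : Fin 2) (ε ε' : Fin 2 → ℝ),
      ε ⬝ᵥ (!![0, 1; -1, 0] *ᵥ (GammaLUp μ *ᵥ ε')) =
        ε' ⬝ᵥ (!![0, 1; -1, 0] *ᵥ (GammaLUp μ *ᵥ ε))) := by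
  constructor <;> intro μ ε ε' <;> fin_cases μ <;>
    simp [GammaLUp, mulVec, dotProduct, Fin.sum_univ_two] <;> ring
end

section
/- (Causality of the Dirac current, Riemannian) In signature (0,2), for either admissible bilinear B with Dirac current κ, one has ‖κ_ε‖² = (ε̄ε)² + (ε̄Γ*ε)², where κ_ε = κ(ε,ε); in particular κ_ε = 0 if and only if ε = 0. -/
open Matrix

/-- Gamma matrices for signature (0,2): Γ₁ = σ₃, Γ₂ = σ₁. -/
def GammaR : Fin 2 → Matrix (Fin 2) (Fin 2) ℝ :=
  ![!![1, 0; 0, -1], !![0, 1; 1, 0]]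

/-- Γ* = Γ₁Γ₂. -/
def GstarR : Matrix (Fin 2) (Fin 2) ℝ := GammaR 0 * GammaR 1

/-- Causality of the Dirac current, Riemannian signature (0,2), for each of the two
admissible bilinears B (the standard inner product and the symplectic form). -/
theorem dirac_current_causality_riemannian :
    ((∀ ε : Fin 2 → ℝ,
        (∑ μ : Fin 2, (ε ⬝ᵥ (GammaR μ *ᵥ ε)) ^ 2) =
          (ε ⬝ᵥ ε) ^ 2 + (ε ⬝ᵥ (GstarR *ᵥ ε)) ^ 2) ∧
      ∀ ε : Fin 2 → ℝ,
        ((fun μ => ε ⬝ᵥ (GammaR μ *ᵥ ε)) = (0 : Fin 2 → ℝ)) ↔ ε = 0) ∧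
    ((∀ ε : Fin 2 → ℝ,
        (∑ μ : Fin 2, (ε ⬝ᵥ (!![0, 1; -1, 0] *ᵥ (GammaR μ *ᵥ ε))) ^ 2) =
          (ε ⬝ᵥ (!![0, 1; -1, 0] *ᵥ ε)) ^ 2 +
            (ε ⬝ᵥ (!![0, 1; -1, 0] *ᵥ (GstarR *ᵥ ε))) ^ 2) ∧
      ∀ ε : Fin 2 → ℝ,
        ((fun μ => ε ⬝ᵥ (!![0, 1; -1, 0] *ᵥ (GammaR μ *ᵥ ε))) = (0 : Fin 2 → ℝ)) ↔ ε = 0) := by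
  refine ⟨⟨fun ε => ?_, fun ε => ⟨fun h => ?_, fun h => ?_⟩⟩,
          ⟨fun ε => ?_, fun ε => ⟨fun h => ?_, fun h => ?_⟩⟩⟩
  · simp [GammaR, GstarR, Fin.sum_univ_two, dotProduct, mulVec, Matrix.mul_apply,
      Fin.sum_univ_succ]
    ring
  · have h0 := congrFun h 0
    have h1 := congrFun h 1
    simp [GammaR, dotProduct, mulVec, Fin.sum_univ_two] at h0 h1
    have key : (ε 0) ^ 2 + (ε 1) ^ 2 = 0 := by
      nlinarith [sq_nonneg ((ε 0) ^ 2 + (ε 1) ^ 2), sq_nonneg (ε 0), sq_nonneg (ε 1)]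
    funext i
    fin_cases i <;> simp <;> nlinarith [sq_nonneg (ε 0), sq_nonneg (ε 1)]
  · subst h; funext μ; simp [dotProduct]
  · simp [GammaR, GstarR, Fin.sum_univ_two, dotProduct, mulVec, Matrix.mul_apply,
      Fin.sum_univ_succ]
    ring
  · have h0 := congrFun h 0
    have h1 := congrFun h 1
    simp [GammaR, dotProduct, mulVec, Fin.sum_univ_two] at h0 h1
    have key : (ε 0) ^ 2 + (ε 1) ^ 2 = 0 := by
      nlinarith [sq_nonneg ((ε 0) ^ 2 + (ε 1) ^ 2), sq_nonneg (ε 0), sq_nonneg (ε 1)]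
    funext i
    fin_cases i <;> simp <;> nlinarith [sq_nonneg (ε 0), sq_nonneg (ε 1)]
  · subst h; funext μ; simp [dotProduct]
end

section
/- (Spencer cocycle solution, case ς_B = −1, Lorentzian) Suppose β: ℝ^{1,1} → End(ℝ²) is linear, written β_μ = a_μ𝟙 + b_{μν}Γ^ν + c_μΓ* in the basis {𝟙, Γ₀, Γ₁, Γ*}, and suppose B(ε, Γ_{(μ}β_{ν)}ε) = 0 for all ε ∈ ℝ² and all μ, ν, where B(ε,ε') = εᵀΩε'. Then a = 0, c = 0, and b_{μν} = b·η_{μν} for some b ∈ ℝ, i.e., β_μ = bΓ_μ. -/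
open Matrix

/-- Gamma matrices (lowered index) for signature (1,1): Γ₀ = Ω, Γ₁ = σ₁. -/
def GammaL : Fin 2 → Matrix (Fin 2) (Fin 2) ℝ :=
  ![!![0, 1; -1, 0], !![0, 1; 1, 0]]

/-- Γ* = σ₃. -/
def GstarL : Matrix (Fin 2) (Fin 2) ℝ := !![1, 0; 0, -1]

/-- The Lorentzian metric η = diag(−1, +1). -/
def etaL : Fin 2 → Fin 2 → ℝ := ![![-1, 0], ![0, 1]]

/-- Solution of the first normalised Spencer cocycle condition, case ς_B = −1 (B = Ω),
signature (1,1): the constraint B(ε, Γ_{(μ}β_{ν)}ε) = 0 forces β_μ = bΓ_μ. -/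
theorem spencer_cocycle_solution_lorentzian_skew
    (a c : Fin 2 → ℝ) (bc : Fin 2 → Fin 2 → ℝ)
    (β : Fin 2 → Matrix (Fin 2) (Fin 2) ℝ)
    (hβ : ∀ μ, β μ = a μ • (1 : Matrix (Fin 2) (Fin 2) ℝ) +
      (∑ ν : Fin 2, bc μ ν • GammaLUp ν) + c μ • GstarL)
    (hcocycle : ∀ (ε : Fin 2 → ℝ) (μ ν : Fin 2),
      ε ⬝ᵥ (!![0, 1; -1, 0] *ᵥ ((GammaL μ * β ν + GammaL ν * β μ) *ᵥ ε)) = 0) :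
    a = 0 ∧ c = 0 ∧ ∃ b : ℝ, (∀ μ ν, bc μ ν = b * etaL μ ν) ∧
      ∀ μ, β μ = b • GammaL μ := by
  have key : ∀ (ε : Fin 2 → ℝ) (μ ν : Fin 2),
      ε ⬝ᵥ (!![0, 1; -1, 0] *ᵥ ((GammaL μ * β ν + GammaL ν * β μ) *ᵥ ε)) = 0 := hcocycle
  have h1 := hcocycle ![1,0] 0 0
  have h2 := hcocycle ![0,1] 0 0
  have h3 := hcocycle ![1,1] 0 0
  have h4 := hcocycle ![1,0] 1 1
  have h5 := hcocycle ![0,1] 1 1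
  have h6 := hcocycle ![1,1] 1 1
  have h7 := hcocycle ![1,1] 0 1
  rw [hβ 0] at h1 h2 h3
  rw [hβ 1] at h4 h5 h6
  rw [hβ 0, hβ 1] at h7
  simp [GammaL, GammaLUp, GstarL, Fin.sum_univ_two, Matrix.mulVec, dotProduct,
    Fin.sum_univ_succ, Matrix.mul_apply, Matrix.one_apply, Matrix.add_apply,
    Matrix.smul_apply, Matrix.neg_apply, Matrix.vecMul, Matrix.vecHead,
    Matrix.vecTail] at h1 h2 h3 h4 h5 h6 h7
  have ha0 : a 0 = 0 := by linarith
  have hc0 : c 0 = 0 := by linarith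
  have ha1 : a 1 = 0 := by linarith
  have hc1 : c 1 = 0 := by linarith
  have hb01 : bc 0 1 = 0 := by linarith
  have hb10 : bc 1 0 = 0 := by linarith
  have hb00 : bc 0 0 = -bc 1 1 := by linarith
  refine ⟨funext fun μ => by fin_cases μ <;> simpa [ha0, ha1],
    funext fun μ => by fin_cases μ <;> simpa [hc0, hc1],
    bc 1 1, fun μ ν => by fin_cases μ <;> fin_cases ν <;>
      simp [etaL, hb00, hb01, hb10] <;> ring, fun μ => ?_⟩
  rw [hβ μ]
  fin_cases μ <;>
    · ext i j
      fin_cases i <;> fin_cases j <;>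
        simp [GammaL, GammaLUp, GstarL, Fin.sum_univ_two, Matrix.one_apply] <;>
        linarith [ha0, ha1, hc0, hc1, hb00, hb01, hb10]
end

section
/- (Spencer cocycle solution, case ς_B = +1, Riemannian) Suppose β: ℝ² → End(ℝ²) is linear, written β_μ = a_μ𝟙 + b_{μν}Γ^ν + c_μΓ*, and suppose εᵀΓ_{(μ}β_{ν)}ε = 0 for all ε ∈ ℝ² and all μ, ν ∈ {1,2}. Then a = 0, c = 0, and b_{μν} = b·ε_{μν} (the Levi-Civita symbol) for some b ∈ ℝ, i.e., β_μ = bε_{μν}Γ^ν. -/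
open Matrix

/-- The 2d Levi-Civita symbol ε₁₂ = −ε₂₁ = 1 (indices `0,1` standing for `1,2`). -/
def lc2 : Fin 2 → Fin 2 → ℝ := ![![0, 1], ![-1, 0]]

/-- Solution of the first normalised Spencer cocycle condition, case ς_B = +1
(B the standard inner product), signature (0,2): the constraint forces
β_μ = b ε_{μν} Γ^ν. -/
theorem spencer_cocycle_solution_riemannian_sym
    (a c : Fin 2 → ℝ) (bc : Fin 2 → Fin 2 → ℝ)
    (β : Fin 2 → Matrix (Fin 2) (Fin 2) ℝ)
    (hβ : ∀ μ, β μ = a μ • (1 : Matrix (Fin 2) (Fin 2) ℝ) +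
      (∑ ν : Fin 2, bc μ ν • GammaR ν) + c μ • GstarR)
    (hcocycle : ∀ (ε : Fin 2 → ℝ) (μ ν : Fin 2),
      ε ⬝ᵥ ((GammaR μ * β ν + GammaR ν * β μ) *ᵥ ε) = 0) :
    a = 0 ∧ c = 0 ∧ ∃ b : ℝ, (∀ μ ν, bc μ ν = b * lc2 μ ν) ∧
      ∀ μ, β μ = ∑ ν : Fin 2, (b * lc2 μ ν) • GammaR ν := by
  have key : ∀ (ε : Fin 2 → ℝ) (μ ν : Fin 2),
      ε ⬝ᵥ ((GammaR μ * β ν + GammaR ν * β μ) *ᵥ ε) = 0 := hcocycle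
  have h1 := key ![1,0] 0 0
  have h2 := key ![0,1] 0 0
  have h3 := key ![1,1] 0 0
  have h4 := key ![1,0] 1 1
  have h5 := key ![0,1] 1 1
  have h6 := key ![1,1] 1 1
  have h7 := key ![1,0] 0 1
  have h8 := key ![0,1] 0 1
  have h9 := key ![1,1] 0 1
  simp only [hβ, GammaR, GstarR, Fin.sum_univ_two, Fin.isValue, Matrix.cons_val_zero,
    Matrix.cons_val_one, Matrix.head_cons, dotProduct, Matrix.mulVec,
    Matrix.mul_apply, Matrix.add_apply, Matrix.smul_apply, Matrix.one_apply,
    Matrix.cons_val', Matrix.empty_val', Matrix.cons_val_fin_one, Matrix.head_fin_const,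
    smul_eq_mul] at h1 h2 h3 h4 h5 h6 h7 h8 h9
  norm_num [Matrix.cons_val_zero, Matrix.cons_val_one] at h1 h2 h3 h4 h5 h6 h7 h8 h9
  have ha0 : a 0 = 0 := by linarith
  have ha1 : a 1 = 0 := by linarith
  have hb00 : bc 0 0 = 0 := by linarith
  have hb11 : bc 1 1 = 0 := by linarith
  have hc0 : c 0 = 0 := by linarith
  have hc1 : c 1 = 0 := by linarith
  have hb10 : bc 1 0 = -(bc 0 1) := by linarith
  refine ⟨funext fun μ => by fin_cases μ <;> simpa [ha0, ha1],
    funext fun μ => by fin_cases μ <;> simpa [hc0, hc1],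
    bc 0 1, ?_, ?_⟩
  · intro μ ν
    fin_cases μ <;> fin_cases ν <;> simp [lc2, hb00, hb11, hb10]
  · intro μ
    have ha : ∀ μ, a μ = 0 := fun μ => by fin_cases μ <;> assumption
    have hc : ∀ μ, c μ = 0 := fun μ => by fin_cases μ <;> assumption
    rw [hβ μ, ha μ, hc μ, zero_smul, zero_smul, zero_add, add_zero]
    fin_cases μ <;> simp [Fin.sum_univ_two, hb00, hb11, hb10, lc2]
end

section
/- (Second cocycle condition via Fierz, Lorentzian ς_B = −1) Let B(ε,ε') = εᵀΩε' and β_μ = bΓ_μ, and define γ(ε,ε)_{μν} = −2B(ε, Γ_μβ_νε). Then for all ε ∈ ℝ², β(κ_ε)ε + ¼γ(ε,ε)_{μν}Γ^{μν}ε = 0, where β(κ_ε) = κ_ε^μβ_μ and κ_ε^μ = B(ε, Γ^με). -/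
open Matrix

/-- Γ^{μν} = Γ^{[μ}Γ^{ν]}. -/
noncomputable def GammaLUpUp (μ ν : Fin 2) : Matrix (Fin 2) (Fin 2) ℝ :=
  (1 / 2 : ℝ) • (GammaLUp μ * GammaLUp ν - GammaLUp ν * GammaLUp μ)

/-- Second normalised Spencer cocycle condition via Fierz, Lorentzian ς_B = −1:
with B = Ω, β_μ = bΓ_μ and γ(ε,ε)_{μν} = −2B(ε, Γ_μβ_νε), one has
β(κ_ε)ε + ¼γ(ε,ε)_{μν}Γ^{μν}ε = 0. -/
theorem second_cocycle_condition_lorentzian (b : ℝ) (ε : Fin 2 → ℝ) :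
    (∑ μ : Fin 2,
        (ε ⬝ᵥ (!![0, 1; -1, 0] *ᵥ (GammaLUp μ *ᵥ ε))) • (b • GammaL μ)) *ᵥ ε +
      ((1 / 4 : ℝ) • ∑ μ : Fin 2, ∑ ν : Fin 2,
        (-2 * (ε ⬝ᵥ (!![0, 1; -1, 0] *ᵥ ((GammaL μ * (b • GammaL ν)) *ᵥ ε)))) •
          GammaLUpUp μ ν) *ᵥ ε = 0 := by
  funext i
  fin_cases i <;>
  · simp [GammaL, GammaLUp, GammaLUpUp, Fin.sum_univ_two, mulVec, dotProduct,
      Matrix.mul_apply, Pi.zero_apply]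
    ring
end
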